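/- Let h(x) = x log x − x + 1 and 0 < r ≤ 1. The inequality h(x) ≥ h(r) + (−h'(r)/(2r))·((max(2r−x,0))² − r²) holds for all x ∈ [0,1] if and only if it holds at x = 1, i.e. if and only if h(1) ≥ h(r) + (−h'(r)/(2r))((max(2r−1,0))² − r²). -/

import Mathlib

open Real

noncomputable section

/-- The function `h(x) = x log x - x + 1` (with `h(0) = 1` since `Real.log 0 = 0`). -/
def hfun (x : ℝ) : ℝ := x * Real.log x - x + 1

/-- Auxiliary: the function `G(x) = h(x) - h(r) - c ((2r-x)^2 - r^2)` with
`c = -log r / (2r)` (no `max`). -/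
def Gfun (r x : ℝ) : ℝ :=
  hfun x - hfun r - (-Real.log r / (2 * r)) * ((2 * r - x) ^ 2 - r ^ 2)

/-- Auxiliary: the derivative of `Gfun r`. -/
def phi (r x : ℝ) : ℝ :=
  Real.log x + 2 * (-Real.log r / (2 * r)) * (2 * r - x)

lemma hfun_continuous : Continuous hfun := by
  unfold hfun
  exact (Real.continuous_mul_log.sub continuous_id).add continuous_const

lemma Gfun_continuous (r : ℝ) : Continuous (Gfun r) := by
  unfold Gfun
  exact (hfun_continuous.sub continuous_const).sub
    (continuous_const.mul (((continuous_const.sub continuous_id).pow 2).sub continuous_const))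

lemma hfun_hasDeriv {x : ℝ} (hx : 0 < x) : HasDerivAt hfun (Real.log x) x := by
  have h1 := Real.hasDerivAt_mul_log hx.ne'
  have h2 := ((h1.sub (hasDerivAt_id x)).add_const 1)
  unfold hfun
  refine h2.congr_deriv ?_
  simp

lemma Gfun_hasDeriv (r : ℝ) {x : ℝ} (hx : 0 < x) :
    HasDerivAt (Gfun r) (phi r x) x := by
  have h3 : HasDerivAt (fun y : ℝ => 2 * r - y) (0 - 1) x :=
    (hasDerivAt_const x (2 * r)).sub (hasDerivAt_id x)
  have h2 : HasDerivAt (fun y : ℝ => (2 * r - y) ^ 2 - r ^ 2)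
      ((2 : ℕ) * (2 * r - x) ^ (2 - 1) * (0 - 1)) x := (h3.pow 2).sub_const (r ^ 2)
  have h4 := ((hfun_hasDeriv hx).sub_const (hfun r)).sub
    (h2.const_mul (-Real.log r / (2 * r)))
  unfold Gfun phi
  refine h4.congr_deriv ?_
  push_cast
  ring

lemma phi_r {r : ℝ} (hr0 : 0 < r) : phi r r = 0 := by
  unfold phi
  field_simp
  ring

lemma phi_left {r x : ℝ} (hr0 : 0 < r) (hlogr : -1 ≤ Real.log r) (hx0 : 0 < x)
    (hxr : x ≤ r) : phi r x ≤ 0 := by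
  unfold phi
  have hlog : Real.log x ≤ x / r - 1 + Real.log r := by
    have h1 : Real.log (x / r) ≤ x / r - 1 := Real.log_le_sub_one_of_pos (by positivity)
    rw [Real.log_div hx0.ne' hr0.ne'] at h1
    linarith
  have key : (x / r - 1 + Real.log r) + 2 * (-Real.log r / (2 * r)) * (2 * r - x)
      = (x - r) * (1 + Real.log r) / r := by
    field_simp
    ring
  have hnp : (x - r) * (1 + Real.log r) / r ≤ 0 := by
    apply div_nonpos_of_nonpos_of_nonneg _ hr0.le
    exact mul_nonpos_of_nonpos_of_nonneg (by linarith) (by linarith)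
  linarith

lemma log_chord {p q a b : ℝ} (hp : 0 < p) (hq : 0 < q) (ha : 0 ≤ a) (hb : 0 ≤ b)
    (hab : a + b = 1) : a * Real.log p + b * Real.log q ≤ Real.log (a * p + b * q) := by
  have := strictConcaveOn_log_Ioi.concaveOn.2 (Set.mem_Ioi.2 hp) (Set.mem_Ioi.2 hq) ha hb hab
  simpa [smul_eq_mul] using this

lemma phi_pos_seg {r y z : ℝ} (hr0 : 0 < r) (hrz : r ≤ z) (hzy : z ≤ y)
    (hy : 0 ≤ phi r y) : 0 ≤ phi r z := by
  rcases hrz.eq_or_lt with h | h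
  · rw [← h]; rw [phi_r hr0]
  rcases hzy.eq_or_lt with h2 | h2
  · rw [h2]; exact hy
  have hry : r < y := h.trans h2
  have hden : 0 < y - r := by linarith
  set a : ℝ := (y - z) / (y - r) with ha_def
  set b : ℝ := (z - r) / (y - r) with hb_def
  have ha' : 0 ≤ a := div_nonneg (by linarith) (by linarith)
  have hb' : 0 ≤ b := div_nonneg (by linarith) (by linarith)
  have hab : a + b = 1 := by rw [ha_def, hb_def]; field_simp; ring
  have hz' : z = a * r + b * y := by rw [ha_def, hb_def]; field_simp; ring
  have hy0 : 0 < y := hr0.trans hry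
  have hz0 : 0 < z := hr0.trans h
  have hlog : a * Real.log r + b * Real.log y ≤ Real.log z := by
    rw [hz'] at *
    exact log_chord hr0 hy0 ha' hb' hab
  have hpr := phi_r hr0
  have haφ : a * phi r r = 0 := by rw [hpr, mul_zero]
  have hbφ : 0 ≤ b * phi r y := mul_nonneg hb' hy
  set c : ℝ := -Real.log r / (2 * r) with hc_def
  have lin : 2 * c * (2 * r - z) = a * (2 * c * (2 * r - r)) + b * (2 * c * (2 * r - y)) := by
    linear_combination (-2*c) * hz' + (-4*c*r) * hab
  unfold phi at *
  nlinarith [hlog, haφ, hbφ, lin]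

lemma phi_neg_seg {r y z : ℝ} (hr0 : 0 < r) (hry : r < y) (hyz : y ≤ z)
    (hy : phi r y ≤ 0) : phi r z ≤ 0 := by
  rcases hyz.eq_or_lt with h | h
  · rw [← h]; exact hy
  have hzr : r < z := hry.trans h
  have hden : 0 < z - r := by linarith
  set a : ℝ := (z - y) / (z - r) with ha_def
  set b : ℝ := (y - r) / (z - r) with hb_def
  have ha' : 0 ≤ a := div_nonneg (by linarith) (by linarith)
  have hb' : 0 < b := by
    apply div_pos (by linarith) hden
  have hab : a + b = 1 := by rw [ha_def, hb_def]; field_simp; ring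
  have hy' : y = a * r + b * z := by rw [ha_def, hb_def]; field_simp; ring
  have hy0 : 0 < y := hr0.trans hry
  have hz0 : 0 < z := hr0.trans hzr
  have hlog : a * Real.log r + b * Real.log z ≤ Real.log y := by
    conv_rhs => rw [hy']
    exact log_chord hr0 hz0 ha' hb'.le hab
  have hpr := phi_r hr0
  have haφ : a * phi r r = 0 := by rw [hpr, mul_zero]
  set c : ℝ := -Real.log r / (2 * r) with hc_def
  have lin : 2 * c * (2 * r - y) = a * (2 * c * (2 * r - r)) + b * (2 * c * (2 * r - z)) := by
    linear_combination (-2*c) * hy' + (-4*c*r) * hab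
  have hbz : b * phi r z ≤ 0 := by
    unfold phi at *
    nlinarith [hlog, haφ, lin, hy]
  by_contra hcon
  push_neg at hcon
  nlinarith [mul_pos hb' hcon]

lemma Gfun_r (r : ℝ) : Gfun r r = 0 := by
  unfold Gfun
  ring

lemma hfun_anti {r : ℝ} (hr0 : 0 < r) : AntitoneOn hfun (Set.Icc r 1) := by
  apply antitoneOn_of_deriv_nonpos (convex_Icc r 1) hfun_continuous.continuousOn
  · rw [interior_Icc]
    intro x hx
    exact ((hfun_hasDeriv (hr0.trans hx.1)).differentiableAt).differentiableWithinAt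
  · rw [interior_Icc]
    intro x hx
    rw [(hfun_hasDeriv (hr0.trans hx.1)).deriv]
    exact Real.log_nonpos (by linarith [hx.1]) hx.2.le

lemma Gfun_anti_left {r : ℝ} (hr0 : 0 < r) (hlogr : -1 ≤ Real.log r) :
    AntitoneOn (Gfun r) (Set.Icc 0 r) := by
  apply antitoneOn_of_deriv_nonpos (convex_Icc 0 r) (Gfun_continuous r).continuousOn
  · rw [interior_Icc]
    intro x hx
    exact ((Gfun_hasDeriv r hx.1).differentiableAt).differentiableWithinAt
  · rw [interior_Icc]
    intro x hx
    rw [(Gfun_hasDeriv r hx.1).deriv]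
    exact phi_left hr0 hlogr hx.1 hx.2.le

lemma Gfun_mono_mid {r y : ℝ} (hr0 : 0 < r) (hry : r ≤ y) (hy : 0 ≤ phi r y) :
    MonotoneOn (Gfun r) (Set.Icc r y) := by
  apply monotoneOn_of_deriv_nonneg (convex_Icc r y) (Gfun_continuous r).continuousOn
  · rw [interior_Icc]
    intro x hx
    exact ((Gfun_hasDeriv r (hr0.trans hx.1)).differentiableAt).differentiableWithinAt
  · rw [interior_Icc]
    intro x hx
    rw [(Gfun_hasDeriv r (hr0.trans hx.1)).deriv]
    exact phi_pos_seg hr0 hx.1.le hx.2.le hy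

lemma Gfun_anti_right {r y s : ℝ} (hr0 : 0 < r) (hry : r < y) (hy : phi r y ≤ 0) :
    AntitoneOn (Gfun r) (Set.Icc y s) := by
  apply antitoneOn_of_deriv_nonpos (convex_Icc y s) (Gfun_continuous r).continuousOn
  · rw [interior_Icc]
    intro x hx
    exact ((Gfun_hasDeriv r (hr0.trans (hry.trans hx.1))).differentiableAt).differentiableWithinAt
  · rw [interior_Icc]
    intro x hx
    rw [(Gfun_hasDeriv r (hr0.trans (hry.trans hx.1))).deriv]
    exact phi_neg_seg hr0 hry hx.1.le hy

theorem stmt_7 (r : ℝ) (hr0 : 0 < r) (hr1 : r ≤ 1) :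
    (∀ x ∈ Set.Icc (0 : ℝ) 1,
        hfun x ≥ hfun r + (-Real.log r / (2 * r)) * ((max (2 * r - x) 0) ^ 2 - r ^ 2)) ↔
      hfun 1 ≥ hfun r + (-Real.log r / (2 * r)) * ((max (2 * r - 1) 0) ^ 2 - r ^ 2) := by
  constructor
  · intro H
    exact H 1 ⟨zero_le_one, le_refl 1⟩
  · intro H x hx
    obtain ⟨hx0, hx1⟩ := hx
    have hrne : r ≠ 0 := hr0.ne'
    have hlogr_nonpos : Real.log r ≤ 0 := Real.log_nonpos hr0.le hr1
    have hc0 : 0 ≤ -Real.log r / (2 * r) := div_nonneg (by linarith) (by linarith)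
    have hfun1 : hfun 1 = 0 := by simp [hfun]
    -- Step 1 : from H we derive -1 ≤ log r
    have hlogr : -1 ≤ Real.log r := by
      by_contra hcon
      push_neg at hcon
      set t : ℝ := -Real.log r with ht_def
      have ht1 : 1 < t := by rw [ht_def]; linarith
      have hrexp : r = Real.exp (-t) := by
        rw [ht_def, neg_neg, Real.exp_log hr0]
      have hexp1 : (2.7182818283 : ℝ) < Real.exp 1 := Real.exp_one_gt_d9
      have hexppos : (0:ℝ) < Real.exp 1 := Real.exp_pos 1
      have hinv : Real.exp (-1) * Real.exp 1 = 1 := by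
        rw [← Real.exp_add]; simp
      have hei : Real.exp (-1) < 0.37 := by nlinarith
      have hrlt : r < Real.exp (-1) := by
        rw [hrexp]
        exact Real.exp_lt_exp.2 (by linarith)
      have hmax0 : max (2*r - 1) 0 = 0 := max_eq_right (by nlinarith)
      have hrt : r * t ≤ Real.exp (-1) := by
        have h1 : t ≤ Real.exp (t - 1) := by
          have := Real.add_one_le_exp (t - 1)
          linarith
        have h2 : r * t ≤ Real.exp (-t) * Real.exp (t - 1) := by
          rw [hrexp]
          exact mul_le_mul_of_nonneg_left h1 (Real.exp_pos _).le
        calc r * t ≤ Real.exp (-t) * Real.exp (t - 1) := h2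
          _ = Real.exp (-1) := by rw [← Real.exp_add]; ring_nf
      have hcr : (-Real.log r / (2 * r)) * (0 ^ 2 - r ^ 2) = -(r * t) / 2 := by
        rw [ht_def]; field_simp; ring
      rw [hfun1, hmax0, hcr] at H
      have hfr : hfun r = r * (-t) - r + 1 := by
        rw [hfun, ht_def]; ring_nf
      rw [hfr] at H
      -- H : 0 ≥ r * (-t) - r + 1 + (-(r*t)/2), i.e. (3/2) r t + r ≥ 1
      nlinarith [hrt, hrlt, hei, H]
    -- key facts
    have hGr := Gfun_r r
    -- the tail bound : for 2r ≤ u ≤ 1, hfun u ≥ hfun 1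
    have htail : ∀ u : ℝ, r ≤ u → u ≤ 1 → hfun 1 ≤ hfun u := by
      intro u hu1 hu2
      exact hfun_anti hr0 ⟨hu1, hu2⟩ ⟨hr1, le_refl 1⟩ hu2
    rcases le_or_gt x r with hxr | hxr
    · -- case x ≤ r : use antitonicity on [0, r]
      have hmax : max (2 * r - x) 0 = 2 * r - x := max_eq_left (by linarith)
      rw [hmax]
      have h1 : Gfun r r ≤ Gfun r x :=
        Gfun_anti_left hr0 hlogr ⟨hx0, hxr⟩ ⟨hr0.le, le_refl r⟩ hxr
      rw [hGr] at h1
      unfold Gfun at h1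
      linarith
    · rcases le_or_gt (2 * r) x with h2rx | h2rx
      · -- case 2r ≤ x : hfun decreasing beyond, use H at 1
        have hmax : max (2 * r - x) 0 = 0 := max_eq_right (by linarith)
        have hmax1 : max (2 * r - 1) 0 = 0 := max_eq_right (by linarith)
        rw [hmax]
        rw [hmax1] at H
        have h1 : hfun 1 ≤ hfun x := htail x (by linarith) hx1
        linarith
      · -- case r < x < 2r : x ∈ [r, s] with s = min (2r) 1
        have hmax : max (2 * r - x) 0 = 2 * r - x := max_eq_left (by linarith)
        rw [hmax]
        set s : ℝ := min (2 * r) 1 with hs_def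
        have hxs : x ≤ s := le_min h2rx.le hx1
        have hrs : r ≤ s := by
          apply le_min (by linarith) hr1
        have hs0 : 0 < s := lt_of_lt_of_le hr0 hrs
        -- G s ≥ 0
        have hGs : 0 ≤ Gfun r s := by
          rcases le_or_gt (2 * r) 1 with h2r1 | h2r1
          · have hseq : s = 2 * r := min_eq_left h2r1
            have hmax1 : max (2 * r - 1) 0 = 0 := max_eq_right (by linarith)
            rw [hmax1] at H
            have h1 : hfun 1 ≤ hfun (2 * r) := htail (2 * r) (by linarith) h2r1
            rw [hseq]
            unfold Gfun
            have : ((2 * r - 2 * r) ^ 2 - r ^ 2) = 0 ^ 2 - r ^ 2 := by ring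
            rw [this]
            linarith
          · have hseq : s = 1 := min_eq_right h2r1.le
            have hmax1 : max (2 * r - 1) 0 = 2 * r - 1 := max_eq_left (by linarith)
            rw [hmax1] at H
            rw [hseq]
            unfold Gfun
            linarith
        rcases le_or_gt 0 (phi r x) with hφx | hφx
        · -- G monotone on [r, x]
          have h1 : Gfun r r ≤ Gfun r x :=
            Gfun_mono_mid hr0 hxr.le hφx ⟨le_refl r, hxr.le⟩ ⟨hxr.le, le_refl x⟩ hxr.le
          rw [hGr] at h1
          unfold Gfun at h1
          linarith
        · -- G antitone on [x, s]
          have h1 : Gfun r s ≤ Gfun r x :=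
            Gfun_anti_right hr0 hxr hφx.le ⟨le_refl x, hxs⟩ ⟨hxs, le_refl s⟩ hxs
          have h2 : 0 ≤ Gfun r x := le_trans hGs h1
          unfold Gfun at h2
          linarith
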